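/- Let K be a commutative field, f(p₀,p₁,p₂,p₃) = p₀p₁p₂ − p₁³ − p₀²p₃, and let u₁, u₂, v₁, v₂ ∈ K. Then in the polynomial ring K[T] one has the identity f((1−T)·(1, u₁, u₂, u₁u₂−u₁³) + T·(1, v₁, v₂, v₁v₂−v₁³)) = T(T−1)(u₁−v₁)·((u₁−v₁)²T − 2u₁² + u₂ + u₁v₁ − v₂ + v₁²). In particular, if u₁ ≠ v₁, the points of the line joining A = K·P(u₁,u₂) and B = K·P(v₁,v₂) that lie on the Cayley surface correspond exactly to the parameter values T = 0, T = 1 and T = δ(A,B) := (2u₁² − u₂ − u₁v₁ + v₂ − v₁²)/(u₁−v₁)², and moreover δ(A,B) = 1 − δ(B,A). -/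
import Mathlib


/-- The cubic form defining the Cayley surface, over any commutative ring. -/
def cayleyF {R : Type*} [CommRing R] (p : Fin 4 → R) : R :=
  p 0 * p 1 * p 2 - (p 1)^3 - (p 0)^2 * p 3

/-- The parametrization of the affine part of the Cayley surface. -/
def cayleyP {K : Type*} [Field K] (u₁ u₂ : K) : Fin 4 → K :=
  ![1, u₁, u₂, u₁*u₂ - u₁^3]

open Polynomial in
theorem stmt_13 {K : Type*} [Field K] (u₁ u₂ v₁ v₂ : K) :
    cayleyF (fun i => (1 - X) * C (cayleyP u₁ u₂ i) + X * C (cayleyP v₁ v₂ i))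
      = X * (X - 1) * C (u₁ - v₁) *
        (C ((u₁ - v₁)^2) * X - C (2*u₁^2 - u₂ - u₁*v₁ + v₂ - v₁^2)) ∧
    (u₁ ≠ v₁ →
      (∀ t : K, cayleyF ((1 - t) • cayleyP u₁ u₂ + t • cayleyP v₁ v₂) = 0 ↔
        t = 0 ∨ t = 1 ∨ t = (2*u₁^2 - u₂ - u₁*v₁ + v₂ - v₁^2) / (u₁ - v₁)^2) ∧
      (2*u₁^2 - u₂ - u₁*v₁ + v₂ - v₁^2) / (u₁ - v₁)^2
        = 1 - (2*v₁^2 - v₂ - v₁*u₁ + u₂ - u₁^2) / (v₁ - u₁)^2) := by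
  have hsub : u₁ - v₁ ≠ 0 → ((u₁ - v₁)^2 ≠ 0) := fun h => pow_ne_zero _ h
  refine ⟨?_, fun hne => ⟨fun t => ?_, ?_⟩⟩
  · simp only [cayleyF, cayleyP]
    simp only [Matrix.cons_val_zero, Matrix.cons_val_one, Matrix.head_cons,
      Matrix.cons_val_two, Matrix.tail_cons, Matrix.cons_val_three]
    simp only [map_sub, map_add, map_mul, map_one, map_pow, map_ofNat]
    ring
  · have h1 : u₁ - v₁ ≠ 0 := sub_ne_zero.mpr hne
    have h2 : (u₁ - v₁)^2 ≠ 0 := pow_ne_zero _ h1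
    have key : cayleyF ((1 - t) • cayleyP u₁ u₂ + t • cayleyP v₁ v₂)
        = t * (t - 1) * (u₁ - v₁) * ((u₁ - v₁)^2 * t - (2*u₁^2 - u₂ - u₁*v₁ + v₂ - v₁^2)) := by
      simp only [cayleyF, cayleyP, Pi.add_apply, Pi.smul_apply, smul_eq_mul]
      simp only [Matrix.cons_val_zero, Matrix.cons_val_one, Matrix.head_cons,
        Matrix.cons_val_two, Matrix.tail_cons, Matrix.cons_val_three]
      ring
    rw [key]
    constructor
    · intro h
      rcases mul_eq_zero.mp h with h' | h'
      · rcases mul_eq_zero.mp h' with h'' | h''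
        · rcases mul_eq_zero.mp h'' with h3 | h3
          · exact Or.inl h3
          · exact Or.inr (Or.inl (sub_eq_zero.mp h3))
        · exact absurd h'' h1
      · right; right
        rw [eq_div_iff h2]
        linear_combination h'
    · rintro (rfl | rfl | rfl) <;> [ring; ring; skip]
      have : (u₁ - v₁)^2 * ((2*u₁^2 - u₂ - u₁*v₁ + v₂ - v₁^2) / (u₁ - v₁)^2)
          = 2*u₁^2 - u₂ - u₁*v₁ + v₂ - v₁^2 := by field_simp
      rw [this]; ring
  · have h1 : v₁ - u₁ ≠ 0 := sub_ne_zero.mpr (Ne.symm hne)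
    have h1' : u₁ - v₁ ≠ 0 := sub_ne_zero.mpr hne
    field_simp
    ring
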